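/- Let x ∈ (0, e^{−e}) and let G(x) = exp(w · exp(−1/w)) with w the unique element of (−1, 0) satisfying w·e^w = 1/ln x. If y satisfies G(x) ≤ y ≤ x, then AT_o(x, y) < C(y), where C(y) is the unique c ∈ (0, 1) with c = y^c. -/

import Mathlib

/-- Alternating towers: `AT 0 (x, y) = 1`, `AT n (x, y) = x ^ AT (n-1) (y, x)`. -/
noncomputable def altTower (x y : ℝ) : ℕ → ℝ
  | 0 => 1
  | n + 1 => x ^ altTower y x n

/-- `AT_o (x, y)`, the limit of the nondecreasing sequence `AT (2n+1) (x, y)`. -/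
noncomputable def ATo (x y : ℝ) : ℝ := ⨆ n : ℕ, altTower x y (2 * n + 1)

/-!
The odd towers are the orbit `f 0, f (f 0), …` of the increasing map `f t = x ^ y ^ t`, so every
`b` with `f b ≤ b` bounds them from above. With `b = exp (1 / w)`, the Lambert relation
`w * exp w * log x = 1` gives `x ^ exp w = b`, and `y ≥ exp (w * exp (-1 / w))` gives
`y ^ b ≥ exp w`; hence `f b ≤ x ^ exp w = b`. Finally `b < exp w ≤ y ^ b` puts `b` strictly
below the fixed point `c` of `t ↦ y ^ t`.
-/

open Real

lemma altTower_one (x y : ℝ) : altTower x y 1 = x := by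
  simp [altTower]

lemma altTower_two_mul_add_three (x y : ℝ) (n : ℕ) :
    altTower x y (2 * n + 3) = x ^ y ^ altTower x y (2 * n + 1) :=
  rfl

lemma monotone_rpow_rpow {x y : ℝ} (hx₀ : 0 < x) (hx₁ : x ≤ 1) (hy₀ : 0 < y) (hy₁ : y ≤ 1) :
    Monotone fun t : ℝ => x ^ y ^ t :=
  Antitone.comp (antitone_rpow_of_base_le_one hx₀ hx₁)
    (antitone_rpow_of_base_le_one hy₀ hy₁)

lemma altTower_odd_le {x y b : ℝ} (hx₀ : 0 < x) (hx₁ : x ≤ 1) (hy₀ : 0 < y) (hy₁ : y ≤ 1)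
    (hb : x ^ y ^ b ≤ b) (n : ℕ) : altTower x y (2 * n + 1) ≤ b := by
  have hf := monotone_rpow_rpow hx₀ hx₁ hy₀ hy₁
  induction n with
  | zero =>
    have hb₀ : 0 ≤ b := (rpow_pos_of_pos hx₀ _).le.trans hb
    calc altTower x y 1 = x ^ y ^ (0 : ℝ) := by simp [altTower_one]
      _ ≤ x ^ y ^ b := hf hb₀
      _ ≤ b := hb
  | succ n ih =>
    calc altTower x y (2 * (n + 1) + 1) = x ^ y ^ altTower x y (2 * n + 1) :=
          altTower_two_mul_add_three x y n
      _ ≤ x ^ y ^ b := hf ih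
      _ ≤ b := hb

lemma ATo_le_of_rpow_rpow_le {x y b : ℝ} (hx₀ : 0 < x) (hx₁ : x ≤ 1) (hy₀ : 0 < y)
    (hy₁ : y ≤ 1) (hb : x ^ y ^ b ≤ b) : ATo x y ≤ b :=
  ciSup_le (altTower_odd_le hx₀ hx₁ hy₀ hy₁ hb)

lemma le_one_of_eq_rpow_self {y c : ℝ} (hc₀ : 0 ≤ c) (hc₁ : c < 1) (hcy : c = y ^ c) : y ≤ 1 := by
  by_contra! hy
  exact hc₁.not_ge (hcy ▸ one_le_rpow hy.le hc₀)

lemma lt_of_lt_rpow_of_eq_rpow {y b c : ℝ} (hy₀ : 0 < y) (hy₁ : y ≤ 1) (hb : b < y ^ b)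
    (hcy : c = y ^ c) : b < c := by
  by_contra! hcb
  exact hb.not_ge ((rpow_le_rpow_of_exponent_ge hy₀ hy₁ hcb).trans (hcy.symm.le.trans hcb))

lemma rpow_exp_eq_exp_inv_of_mul_exp_eq {x w : ℝ} (hx : 0 < x)
    (hwx : w * exp w = 1 / log x) : x ^ exp w = exp (1 / w) := by
  have hlog : log x = (w * exp w)⁻¹ := by rw [hwx, one_div, inv_inv]
  rw [rpow_def_of_pos hx, hlog, mul_inv, mul_assoc, inv_mul_cancel₀ (exp_pos w).ne', mul_one,
    one_div]

lemma exp_mul_exp_neg_inv_rpow (w : ℝ) : exp (w * exp (-1 / w)) ^ exp (1 / w) = exp w := by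
  rw [← exp_mul, mul_assoc, ← exp_add, neg_div, neg_add_cancel, exp_zero, mul_one]

lemma exp_inv_lt_exp {w : ℝ} (hw₁ : -1 < w) (hw₀ : w < 0) : exp (1 / w) < exp w := by
  have : 1 / w < -1 := by rw [div_lt_iff_of_neg hw₀]; linarith
  exact exp_lt_exp.mpr (by linarith)

theorem stmt_12_general (x y w c : ℝ) (hx : x ∈ Set.Ioo 0 (Real.exp (-Real.exp 1)))
    (hw : w ∈ Set.Ioo (-1 : ℝ) 0) (hwx : w * Real.exp w = 1 / Real.log x)
    (hy₁ : Real.exp (w * Real.exp (-1 / w)) ≤ y)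
    (hc : c ∈ Set.Ioo (0 : ℝ) 1) (hcy : c = y ^ c) :
    ATo x y < c := by
  have hx₁ : x < 1 :=
    (log_neg_iff hx.1).1 (one_div_neg.1 (hwx ▸ mul_neg_of_neg_of_pos hw.2 (exp_pos w)))
  have hy₀ : 0 < y := (exp_pos _).trans_le hy₁
  have hy₁' : y ≤ 1 := le_one_of_eq_rpow_self hc.1.le hc.2 hcy
  have hyb : exp w ≤ y ^ exp (1 / w) :=
    exp_mul_exp_neg_inv_rpow w ▸ rpow_le_rpow (exp_pos _).le hy₁ (exp_pos _).le
  have hb : x ^ y ^ exp (1 / w) ≤ exp (1 / w) :=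
    (rpow_le_rpow_of_exponent_ge hx.1 hx₁.le hyb).trans_eq
      (rpow_exp_eq_exp_inv_of_mul_exp_eq hx.1 hwx)
  calc ATo x y ≤ exp (1 / w) := ATo_le_of_rpow_rpow_le hx.1 hx₁.le hy₀ hy₁' hb
    _ < c := lt_of_lt_rpow_of_eq_rpow hy₀ hy₁' ((exp_inv_lt_exp hw.1 hw.2).trans_le hyb) hcy

theorem stmt_12 (x y w c : ℝ) (hx : x ∈ Set.Ioo 0 (Real.exp (-Real.exp 1)))
    (hw : w ∈ Set.Ioo (-1 : ℝ) 0) (hwx : w * Real.exp w = 1 / Real.log x)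
    (hy₁ : Real.exp (w * Real.exp (-1 / w)) ≤ y) (hy₂ : y ≤ x)
    (hc : c ∈ Set.Ioo (0 : ℝ) 1) (hcy : c = y ^ c) :
    ATo x y < c :=
  stmt_12_general x y w c hx hw hwx hy₁ hc hcy
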